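/- Let 0<q<1 and t>0. Let f:ℂ→ℂ be an entire function (given by a power series with infinite radius of convergence). Let R>0 satisfy R·√(1−q) > 2·√t, and define b_n(t) := t^{−n}·∫_ℝ f(x)·h_n(x;t) γ_t(dx). Then for every n≥0, |b_n(t)| ≤ (max_{|z|=R} |f(z)|)·√([n]_q!)·(2/(R·√(1−q)))^n · R·√(1−q)/(R·√(1−q) − 2·√t). -/

import Mathlib

open MeasureTheory

/-- `[n]_q = 1 + q + ⋯ + q^{n-1}`. -/
noncomputable def qNat (q : ℝ) (n : ℕ) : ℝ := ∑ i ∈ Finset.range n, q ^ i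

/-- `[n]_q! = [1]_q [2]_q ⋯ [n]_q`. -/
noncomputable def qFact (q : ℝ) (n : ℕ) : ℝ := ∏ i ∈ Finset.range n, qNat q (i + 1)

/-- Monic continuous q-Hermite polynomials: `h_0 = 1`, `h_1 = x`,
`x·h_n(x;t) = h_{n+1}(x;t) + t·[n]_q·h_{n−1}(x;t)`. -/
noncomputable def qH (q : ℝ) : ℕ → ℝ → ℝ → ℝ
  | 0, _, _ => 1
  | 1, x, _ => x
  | (n + 2), x, t => x * qH q (n + 1) x t - t * qNat q (n + 1) * qH q n x t

/-!
Since `γ_t` lives on `|x| ≤ B = 2√t/√(1-q) < R`, the Taylor series `f = ∑ c_k z^k` may be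
integrated term by term against `h_n`. The terms `k < n` vanish: `x^k` is a combination of
`h_0, …, h_k`, all orthogonal to `h_n`. For `k ≥ n`, Cauchy's estimate `|c_k| ≤ M R^{-k}`
(`M` the maximum of `|f|` on `|z| = R`) and
`|∫ x^k h_n dγ_t| ≤ B^k ∫ |h_n| dγ_t ≤ B^k √([n]_q! t^n)` (Cauchy–Schwarz) leave the geometric
tail `M √([n]_q! t^n) (B/R)^n / (1 - B/R)`.
-/

open Polynomial Metric ProbabilityTheory

noncomputable def qHermitePoly (q t : ℝ) : ℕ → ℝ[X]
  | 0 => 1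
  | 1 => X
  | n + 2 => X * qHermitePoly q t (n + 1) - C (t * qNat q (n + 1)) * qHermitePoly q t n

theorem qHermitePoly_eval (q t x : ℝ) : ∀ n, (qHermitePoly q t n).eval x = qH q n x t
  | 0 => by simp [qHermitePoly, qH]
  | 1 => by simp [qHermitePoly, qH]
  | n + 2 => by
    simp [qHermitePoly, qH, qHermitePoly_eval q t x n, qHermitePoly_eval q t x (n + 1)]

theorem continuous_qH (q t : ℝ) (n : ℕ) : Continuous fun x => qH q n x t := by
  simpa only [qHermitePoly_eval] using (qHermitePoly q t n).continuous

theorem qHermitePoly_isMonicOfDegree (q t : ℝ) : ∀ n, IsMonicOfDegree (qHermitePoly q t n) n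
  | 0 => by simp [qHermitePoly]
  | 1 => isMonicOfDegree_X ℝ
  | n + 2 => by
    have hlead := (isMonicOfDegree_X ℝ).mul (qHermitePoly_isMonicOfDegree q t (n + 1))
    rw [add_comm 1, add_assoc] at hlead
    refine hlead.sub <| (natDegree_C_mul_le _ _).trans_lt ?_
    rw [(qHermitePoly_isMonicOfDegree q t n).natDegree_eq]
    omega

noncomputable def qHermiteSeq (q t : ℝ) : Polynomial.Sequence ℝ where
  elems' := qHermitePoly q t
  degree_eq' n := by
    have h := qHermitePoly_isMonicOfDegree q t n
    rw [degree_eq_natDegree h.ne_zero, h.natDegree_eq]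

theorem Continuous.memLp_of_ae_abs_le {E : Type*} [NormedAddCommGroup E] {μ : Measure ℝ}
    [IsFiniteMeasure μ] {B : ℝ} (hμ : ∀ᵐ x ∂μ, |x| ≤ B) {g : ℝ → E} (hg : Continuous g)
    (p : ENNReal) : MemLp g p μ := by
  obtain ⟨C, hC⟩ := (isCompact_Icc (a := -B) (b := B)).exists_bound_of_continuousOn hg.continuousOn
  exact MemLp.of_bound hg.aestronglyMeasurable C (hμ.mono fun x hx => hC x (abs_le.1 hx))

theorem Continuous.integrable_of_ae_abs_le {E : Type*} [NormedAddCommGroup E] {μ : Measure ℝ}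
    [IsFiniteMeasure μ] {B : ℝ} (hμ : ∀ᵐ x ∂μ, |x| ≤ B) {g : ℝ → E} (hg : Continuous g) :
    Integrable g μ :=
  memLp_one_iff_integrable.1 (hg.memLp_of_ae_abs_le hμ 1)

theorem integral_eval_mul_eq_zero_of_mem_span {μ : Measure ℝ} {g : ℝ → ℝ}
    (hint : ∀ p : ℝ[X], Integrable (fun x => p.eval x * g x) μ) {s : Set ℝ[X]}
    (hs : ∀ p ∈ s, ∫ x, p.eval x * g x ∂μ = 0) {p : ℝ[X]} (hp : p ∈ Submodule.span ℝ s) :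
    ∫ x, p.eval x * g x ∂μ = 0 := by
  induction hp using Submodule.span_induction with
  | mem p hp => exact hs p hp
  | zero => simp
  | add p r _ _ hp hr =>
    simp only [eval_add, add_mul, integral_add (hint p) (hint r), hp, hr, add_zero]
  | smul a p _ hp =>
    simp only [eval_smul, smul_eq_mul, mul_assoc, integral_const_mul, hp, mul_zero]

theorem Polynomial.Sequence.integral_eval_mul_eq_zero_of_degree_lt (S : Polynomial.Sequence ℝ)
    {μ : Measure ℝ} {g : ℝ → ℝ} (hint : ∀ p : ℝ[X], Integrable (fun x => p.eval x * g x) μ)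
    {n : ℕ} (horth : ∀ i < n, ∫ x, (S i).eval x * g x ∂μ = 0) {p : ℝ[X]} (hp : p.degree < n) :
    ∫ x, p.eval x * g x ∂μ = 0 := by
  refine integral_eval_mul_eq_zero_of_mem_span hint (s := S '' Set.Iio n) ?_ ?_
  · rintro _ ⟨i, hi, rfl⟩
    exact horth i hi
  · rw [S.span_degreeLT fun i _ => (leadingCoeff_ne_zero.2 (S.ne_zero i)).isUnit]
    exact mem_degreeLT.2 hp

theorem integral_pow_mul_qH_eq_zero {q t : ℝ} {μ : Measure ℝ} [IsFiniteMeasure μ] {B : ℝ}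
    (hμ : ∀ᵐ x ∂μ, |x| ≤ B) {n : ℕ} (horth : ∀ m < n, ∫ x, qH q n x t * qH q m x t ∂μ = 0)
    {k : ℕ} (hk : k < n) : ∫ x, x ^ k * qH q n x t ∂μ = 0 := by
  simpa using (qHermiteSeq q t).integral_eval_mul_eq_zero_of_degree_lt
    (fun p => (p.continuous.mul (continuous_qH q t n)).integrable_of_ae_abs_le hμ)
    (fun i hi => by simpa [qHermiteSeq, qHermitePoly_eval, mul_comm] using horth i hi)
    (p := X ^ k) (by rw [degree_X_pow]; exact_mod_cast hk)

theorem integral_abs_le_sqrt_integral_sq {Ω : Type*} [MeasurableSpace Ω] {μ : Measure Ω}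
    [IsProbabilityMeasure μ] {g : Ω → ℝ} (hg : MemLp g 2 μ) :
    ∫ x, |g x| ∂μ ≤ √(∫ x, g x ^ 2 ∂μ) := by
  have hvar := variance_eq_sub hg.abs ▸ variance_nonneg _ μ
  refine (le_abs_self _).trans (Real.abs_le_sqrt ?_)
  simpa [sq_abs] using hvar

theorem integral_abs_qH_le {q t : ℝ} (ht : 0 ≤ t) {μ : Measure ℝ} [IsProbabilityMeasure μ]
    {B : ℝ} (hμ : ∀ᵐ x ∂μ, |x| ≤ B) {n : ℕ}
    (hnorm : ∫ x, qH q n x t * qH q n x t ∂μ = qFact q n * t ^ n) :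
    ∫ x, |qH q n x t| ∂μ ≤ √(qFact q n) * √t ^ n := by
  have htn : t ^ n = √t ^ n * √t ^ n := by rw [← mul_pow, Real.mul_self_sqrt ht]
  calc ∫ x, |qH q n x t| ∂μ ≤ √(∫ x, qH q n x t ^ 2 ∂μ) :=
        integral_abs_le_sqrt_integral_sq ((continuous_qH q t n).memLp_of_ae_abs_le hμ 2)
    _ = √(qFact q n) * √t ^ n := by
        simp only [sq, hnorm]
        rw [Real.sqrt_mul' _ (by positivity), htn, Real.sqrt_mul_self (by positivity)]

theorem abs_integral_pow_mul_le {μ : Measure ℝ} [IsFiniteMeasure μ] {B : ℝ}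
    (hμ : ∀ᵐ x ∂μ, |x| ≤ B) {g : ℝ → ℝ} (hg : Integrable g μ) (k : ℕ) :
    |∫ x, x ^ k * g x ∂μ| ≤ B ^ k * ∫ x, |g x| ∂μ := by
  rw [← integral_const_mul]
  refine (abs_integral_le_integral_abs).trans (integral_mono_of_nonneg ?_ (hg.abs.const_mul _) ?_)
  · exact Filter.Eventually.of_forall fun x => abs_nonneg _
  · filter_upwards [hμ] with x hx
    rw [abs_mul, abs_pow]
    exact mul_le_mul_of_nonneg_right (pow_le_pow_left₀ (abs_nonneg x) hx k) (abs_nonneg _)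

theorem hasSum_integral_mul_of_hasSum_pow {μ : Measure ℝ} [IsFiniteMeasure μ] {B : ℝ}
    (hμ : ∀ᵐ x ∂μ, |x| ≤ B) {f : ℝ → ℂ} {c : ℕ → ℂ}
    (hf : ∀ x : ℝ, HasSum (fun k => c k * (x : ℂ) ^ k) (f x))
    (hc : Summable fun k => ‖c k‖ * B ^ k) {g : ℝ → ℝ} (hg : Integrable g μ) :
    HasSum (fun k => c k * ((∫ x, x ^ k * g x ∂μ : ℝ) : ℂ)) (∫ x, f x * (g x : ℂ) ∂μ) := by
  have hF : ∀ k, ∫ x, c k * (x : ℂ) ^ k * (g x : ℂ) ∂μ = c k * ((∫ x, x ^ k * g x ∂μ : ℝ) : ℂ) := by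
    intro k
    simp only [mul_assoc, integral_const_mul, ← integral_complex_ofReal, Complex.ofReal_mul,
      Complex.ofReal_pow]
  simp only [← hF]
  refine hasSum_integral_of_dominated_convergence (fun k x => ‖c k‖ * B ^ k * |g x|)
    (fun k => ?_) (fun k => ?_) (Filter.Eventually.of_forall fun x => hc.mul_right _) ?_
    (Filter.Eventually.of_forall fun x => (hf x).mul_right _)
  · fun_prop
  · filter_upwards [hμ] with x hx
    simp only [norm_mul, norm_pow, Complex.norm_real, Real.norm_eq_abs]
    gcongr
  · simp only [tsum_mul_right]
    exact hg.abs.const_mul _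

theorem norm_le_of_hasSum_of_norm_le_geometric {E : Type*} [NormedAddCommGroup E]
    {a : ℕ → E} {s : E} (hs : HasSum a s) {n : ℕ} (hzero : ∀ k < n, a k = 0) {C r : ℝ}
    (hr0 : 0 ≤ r) (hr1 : r < 1) (hbound : ∀ k, ‖a k‖ ≤ C * r ^ k) :
    ‖s‖ ≤ C * r ^ n / (1 - r) := by
  have htail : HasSum (fun k => a (k + n)) s := by
    simpa [Finset.sum_eq_zero fun k hk => hzero k (Finset.mem_range.1 hk)]
      using (hasSum_nat_add_iff' n).2 hs
  refine htail.norm_le_of_bounded ((hasSum_geometric_of_lt_one hr0 hr1).mul_left (C * r ^ n))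
    fun k => (hbound _).trans_eq ?_
  ring

theorem hasFPowerSeriesOnBall_ofScalars_of_hasSum {f : ℂ → ℂ} {c : ℕ → ℂ}
    (hf : ∀ z, HasSum (fun k => c k * z ^ k) (f z)) :
    HasFPowerSeriesOnBall f (FormalMultilinearSeries.ofScalars ℂ c) 0 ⊤ where
  r_le := by
    refine top_le_iff.2 (ENNReal.eq_top_of_forall_nnreal_le fun r => ?_)
    refine FormalMultilinearSeries.le_radius_of_tendsto _ (l := 0) ?_
    simpa [FormalMultilinearSeries.ofScalars_norm] using
      (hf r).summable.tendsto_atTop_zero.norm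
  r_pos := ENNReal.zero_lt_top
  hasSum {y} _ := by
    simpa [FormalMultilinearSeries.ofScalars_apply_eq, mul_comm] using hf y

theorem differentiable_of_hasSum_pow {f : ℂ → ℂ} {c : ℕ → ℂ}
    (hf : ∀ z, HasSum (fun k => c k * z ^ k) (f z)) : Differentiable ℂ f := fun z =>
  ((hasFPowerSeriesOnBall_ofScalars_of_hasSum hf).analyticAt_of_mem (by simp)).differentiableAt

theorem norm_coeff_le_of_hasSum_pow {f : ℂ → ℂ} {c : ℕ → ℂ}
    (hf : ∀ z, HasSum (fun k => c k * z ^ k) (f z)) {R M : ℝ} (hR : 0 < R)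
    (hM : ∀ z ∈ sphere (0 : ℂ) R, ‖f z‖ ≤ M) (k : ℕ) : ‖c k‖ ≤ M / R ^ k := by
  have hp := hasFPowerSeriesOnBall_ofScalars_of_hasSum hf
  have hdiff := differentiable_of_hasSum_pow hf
  have hc : c = fun k => iteratedDeriv k f 0 / k.factorial :=
    FormalMultilinearSeries.ofScalars_series_injective ℂ ℂ
      (hp.hasFPowerSeriesAt.eq_formalMultilinearSeries (hdiff.analyticAt 0).hasFPowerSeriesAt)
  have hCauchy := Complex.norm_iteratedDeriv_le_of_forall_mem_sphere_norm_le k hR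
    hdiff.diffContOnCl hM
  rw [hc, norm_div, Complex.norm_natCast, div_le_iff₀ (by positivity)]
  calc ‖iteratedDeriv k f 0‖ ≤ k.factorial * M / R ^ k := hCauchy
    _ = M / R ^ k * k.factorial := by ring

theorem norm_le_biSup_sphere {f : ℂ → ℂ} (hf : Continuous f) {R : ℝ} {z : ℂ}
    (hz : z ∈ sphere (0 : ℂ) R) : ‖f z‖ ≤ ⨆ w ∈ sphere (0 : ℂ) R, ‖f w‖ := by
  refine le_ciSup₂ (f := fun w (_ : w ∈ sphere (0 : ℂ) R) => ‖f w‖) ?_ z hz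
  obtain ⟨C, hC⟩ := (isCompact_sphere (0 : ℂ) R).exists_bound_of_continuousOn hf.continuousOn
  refine ⟨C, ?_⟩
  simp only [mem_upperBounds, Set.mem_iUnion, Set.mem_range]
  rintro _ ⟨w, hw, rfl⟩
  exact hC w hw

theorem norm_integral_mul_le_of_forall_integral_pow_mul_eq_zero {μ : Measure ℝ}
    [IsFiniteMeasure μ] {B R M A : ℝ} (hμ : ∀ᵐ x ∂μ, |x| ≤ B) (hB : 0 ≤ B) (hR : 0 < R)
    (hBR : B < R) {f : ℂ → ℂ} {c : ℕ → ℂ} (hf : ∀ z, HasSum (fun k => c k * z ^ k) (f z))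
    (hM : ∀ z ∈ sphere (0 : ℂ) R, ‖f z‖ ≤ M) {g : ℝ → ℝ} (hg : Continuous g)
    (hA : ∫ x, |g x| ∂μ ≤ A) {n : ℕ} (horth : ∀ k < n, ∫ x, x ^ k * g x ∂μ = 0) :
    ‖∫ x, f x * (g x : ℂ) ∂μ‖ ≤ M * A * (B / R) ^ n / (1 - B / R) := by
  have hρ : B / R < 1 := (div_lt_one hR).2 hBR
  have hA0 : 0 ≤ A := (integral_nonneg fun x => abs_nonneg (g x)).trans hA
  have hcB : ∀ k, ‖c k‖ * B ^ k ≤ M * (B / R) ^ k := fun k =>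
    calc ‖c k‖ * B ^ k ≤ M / R ^ k * B ^ k := by
          gcongr; exact norm_coeff_le_of_hasSum_pow hf hR hM k
      _ = M * (B / R) ^ k := by rw [div_pow]; ring
  have hgi : Integrable g μ := hg.integrable_of_ae_abs_le hμ
  have hsum := hasSum_integral_mul_of_hasSum_pow hμ (fun x => hf x)
    (Summable.of_nonneg_of_le (fun k => by positivity) hcB
      ((summable_geometric_of_lt_one (by positivity) hρ).mul_left M)) hgi
  refine norm_le_of_hasSum_of_norm_le_geometric hsum (fun k hk => by simp [horth k hk])
    (by positivity) hρ fun k => ?_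
  rw [norm_mul, Complex.norm_real, Real.norm_eq_abs]
  calc ‖c k‖ * |∫ x, x ^ k * g x ∂μ| ≤ ‖c k‖ * (B ^ k * A) := by
        gcongr
        exact (abs_integral_pow_mul_le hμ hgi k).trans (by gcongr)
    _ = ‖c k‖ * B ^ k * A := by ring
    _ ≤ M * (B / R) ^ k * A := mul_le_mul_of_nonneg_right (hcB k) hA0
    _ = M * A * (B / R) ^ k := by ring

theorem qHermite_coefficient_contour_bound_general
    (q : ℝ)
    (γ : ℝ → Measure ℝ)
    (hprob : ∀ t : ℝ, 0 < t → IsProbabilityMeasure (γ t))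
    (hsupp : ∀ t : ℝ, 0 < t →
      γ t {x : ℝ | |x| ≤ 2 * Real.sqrt t / Real.sqrt (1 - q)}ᶜ = 0)
    (horth : ∀ t : ℝ, 0 < t → ∀ m n : ℕ,
      ∫ x, qH q n x t * qH q m x t ∂(γ t) = if m = n then qFact q n * t ^ n else 0)
    (t : ℝ) (ht : 0 < t)
    (f : ℂ → ℂ) (c : ℕ → ℂ) (hf : ∀ z : ℂ, HasSum (fun k : ℕ => c k * z ^ k) (f z))
    (R : ℝ) (hRt : 2 * Real.sqrt t < R * Real.sqrt (1 - q)) (n : ℕ) :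
    ‖(t : ℂ) ^ (-(n : ℤ)) *
        ∫ x : ℝ, f x * (qH q n x t : ℂ) ∂(γ t)‖ ≤
      (⨆ z ∈ Metric.sphere (0 : ℂ) R, ‖f z‖) * Real.sqrt (qFact q n) *
        (2 / (R * Real.sqrt (1 - q))) ^ n *
        (R * Real.sqrt (1 - q) / (R * Real.sqrt (1 - q) - 2 * Real.sqrt t)) := by
  have := hprob t ht
  set s := √(1 - q)
  have hst : 0 < √t := Real.sqrt_pos.2 ht
  have hRs : 0 < R * s := by linarith
  obtain ⟨hR, hs⟩ : 0 < R ∧ 0 < s := (pos_and_pos_or_neg_and_neg_of_mul_pos hRs).resolve_right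
    fun h => (Real.sqrt_nonneg _).not_gt h.2
  set B := 2 * √t / s
  have hμ : ∀ᵐ x ∂(γ t), |x| ≤ B := hsupp t ht
  have hBR : B < R := by rw [div_lt_iff₀ hs]; exact hRt
  have hexp := norm_integral_mul_le_of_forall_integral_pow_mul_eq_zero hμ (by positivity) hR hBR
    hf (fun z hz => norm_le_biSup_sphere (differentiable_of_hasSum_pow hf).continuous hz)
    (continuous_qH q t n) (integral_abs_qH_le ht.le hμ ((horth t ht n n).trans (if_pos rfl)))
    fun k hk => integral_pow_mul_qH_eq_zero hμ (fun m hm => by rw [horth t ht m n, if_neg hm.ne]) hk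
  rw [norm_mul, norm_zpow, Complex.norm_real, Real.norm_of_nonneg ht.le]
  calc t ^ (-(n : ℤ)) * ‖∫ x : ℝ, f x * (qH q n x t : ℂ) ∂(γ t)‖
      ≤ t ^ (-(n : ℤ)) * ((⨆ z ∈ Metric.sphere (0 : ℂ) R, ‖f z‖) * (√(qFact q n) * √t ^ n) *
          (B / R) ^ n / (1 - B / R)) := mul_le_mul_of_nonneg_left hexp (by positivity)
    _ = _ := by
      have htn : t ^ n = √t ^ n * √t ^ n := by rw [← mul_pow, Real.mul_self_sqrt ht.le]
      have hden : R * s - 2 * √t ≠ 0 := by linarith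
      simp only [B, zpow_neg, zpow_natCast, htn, div_pow, mul_pow]
      field_simp

/-- if `f` is entire (sum of a power series with infinite radius of
convergence) and `R√(1−q) > 2√t`, then the q-Hermite expansion coefficients
`b_n(t) = t^{−n} ∫ f(x) h_n(x;t) γ_t(dx)` satisfy
`|b_n(t)| ≤ (max_{|z|=R}|f(z)|)·√([n]_q!)·(2/(R√(1−q)))^n·R√(1−q)/(R√(1−q) − 2√t)`. -/
theorem qHermite_coefficient_contour_bound
    (q : ℝ) (hq0 : 0 < q) (hq1 : q < 1)
    (γ : ℝ → Measure ℝ)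
    (hprob : ∀ t : ℝ, 0 < t → IsProbabilityMeasure (γ t))
    (hsupp : ∀ t : ℝ, 0 < t →
      γ t {x : ℝ | |x| ≤ 2 * Real.sqrt t / Real.sqrt (1 - q)}ᶜ = 0)
    (horth : ∀ t : ℝ, 0 < t → ∀ m n : ℕ,
      ∫ x, qH q n x t * qH q m x t ∂(γ t) = if m = n then qFact q n * t ^ n else 0)
    (hpush : ∀ t : ℝ, 0 < t → γ t = Measure.map (fun x => Real.sqrt t * x) (γ 1))
    (t : ℝ) (ht : 0 < t)
    (f : ℂ → ℂ) (c : ℕ → ℂ) (hf : ∀ z : ℂ, HasSum (fun k : ℕ => c k * z ^ k) (f z))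
    (R : ℝ) (hR : 0 < R) (hRt : 2 * Real.sqrt t < R * Real.sqrt (1 - q)) (n : ℕ) :
    ‖(t : ℂ) ^ (-(n : ℤ)) *
        ∫ x : ℝ, f x * (qH q n x t : ℂ) ∂(γ t)‖ ≤
      (⨆ z ∈ Metric.sphere (0 : ℂ) R, ‖f z‖) * Real.sqrt (qFact q n) *
        (2 / (R * Real.sqrt (1 - q))) ^ n *
        (R * Real.sqrt (1 - q) / (R * Real.sqrt (1 - q) - 2 * Real.sqrt t)) :=
  qHermite_coefficient_contour_bound_general q γ hprob hsupp horth t ht f c hf R hRt n
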